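/- The core Z := ⋂_{g ∈ Γ} σ̄(g)''(∂Y) is a nonempty closed subset of Ultrafilter X contained in ∂Y, and it is invariant under the Γ-maps: σ̄(g)''(Z) = Z for every g ∈ Γ. -/

import Mathlib

open scoped BigOperators symmDiff Classical

universe u v

/-- A sofic approximation of a group `Γ` generated by a finite symmetric set `S`. -/
structure SoficApprox (Γ : Type u) [Group Γ] (S : Finset Γ) where
  F : ℕ → Finset Γ
  F_mono : Monotone F
  F_one : ∀ i, (1 : Γ) ∈ F i
  F_exhausts : ∀ g : Γ, ∃ i, g ∈ F i
  eps : ℕ → ℝ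
  eps_pos : ∀ i, 0 < eps i
  eps_lim : Filter.Tendsto eps Filter.atTop (nhds 0)
  X : ℕ → Type
  finX : ∀ i, Finite (X i)
  neX : ∀ i, Nonempty (X i)
  sigma : (i : ℕ) → Γ → Equiv.Perm (X i)
  Y : (i : ℕ) → Set (X i)
  Y_large : ∀ i, (1 - eps i) * (Nat.card (X i) : ℝ) ≤ ((Y i).ncard : ℝ)
  sigma_mul : ∀ i, ∀ g ∈ F i, ∀ h ∈ F i, ∀ y ∈ Y i, sigma i g (sigma i h y) = sigma i (g * h) y
  sigma_free : ∀ i, ∀ g ∈ F i, g ≠ 1 → ∀ y ∈ Y i, sigma i g y ≠ y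

namespace SoficApprox

variable {Γ : Type u} [Group Γ] {S : Finset Γ}

/-- The total space (space of graphs) `X = ⨆ i, X i`. -/
abbrev Total (A : SoficApprox Γ S) : Type := Σ i, A.X i

/-- The bijection `σ(g)` of the total space acting as `σ_i(g)` on each `X i`. -/
def perm (A : SoficApprox Γ S) (g : Γ) : Equiv.Perm A.Total :=
  Equiv.sigmaCongrRight fun i => A.sigma i g

/-- The continuous extension `σ̄(g)` of `σ(g)` to the Stone–Čech compactification. -/
def permBar (A : SoficApprox Γ S) (g : Γ) : Ultrafilter A.Total → Ultrafilter A.Total :=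
  Ultrafilter.map (A.perm g)

/-- The union `Y = ⨆ i, Y i` inside the total space. -/
def Ytot (A : SoficApprox Γ S) : Set A.Total := {p | p.2 ∈ A.Y p.1}

/-- `∂Y`: free ultrafilters containing `Y`. -/
def bdY (A : SoficApprox Γ S) : Set (Ultrafilter A.Total) :=
  {η | (∀ p : A.Total, η ≠ pure p) ∧ A.Ytot ∈ η}

/-- The core `Z = ⋂_{g ∈ Γ} σ̄(g)''(∂Y)` of the sofic boundary. -/
def core (A : SoficApprox Γ S) : Set (Ultrafilter A.Total) :=
  ⋂ g : Γ, A.permBar g '' A.bdY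

/-- The `S`-labelled graph structure on `X i`, with edges `{x, σ_i(s)(x)}` for `s ∈ S`. -/
def graph (A : SoficApprox Γ S) (i : ℕ) : SimpleGraph (A.X i) where
  Adj x y := x ≠ y ∧ ∃ s ∈ S, A.sigma i s x = y ∨ A.sigma i s y = x
  symm := ⟨fun x y h => ⟨h.1.symm, by obtain ⟨s, hs, h'⟩ := h.2; exact ⟨s, hs, h'.symm⟩⟩⟩
  loopless := ⟨fun x h => h.1 rfl⟩

/-- An admissible metric on the total space: a metric restricting to the edge-path
metric on each `X i` and with distances between distinct components tending to `∞`. -/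
def Admissible (A : SoficApprox Γ S) (d : A.Total → A.Total → ℝ) : Prop :=
  (∀ p q, d p q = d q p) ∧
  (∀ p q r, d p r ≤ d p q + d q r) ∧
  (∀ p q, d p q = 0 ↔ p = q) ∧
  (∀ p q, 0 ≤ d p q) ∧
  (∀ (i : ℕ) (x y : A.X i), d ⟨i, x⟩ ⟨i, y⟩ = ((A.graph i).dist x y : ℝ)) ∧
  (∀ R : ℝ, ∃ N : ℕ, ∀ i j : ℕ, i ≠ j → N ≤ i + j →
      ∀ (x : A.X i) (y : A.X j), R < d ⟨i, x⟩ ⟨j, y⟩)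

/-- The entourage `E_R` viewed inside `βX × βX`. -/
def ER (A : SoficApprox Γ S) (d : A.Total → A.Total → ℝ) (R : ℝ) :
    Set (Ultrafilter A.Total × Ultrafilter A.Total) :=
  {p | ∃ a b : A.Total, d a b ≤ R ∧ p = (pure a, pure b)}

end SoficApprox

/-- Word length of `g` with respect to the generating set `S`. -/
noncomputable def wordLength {Γ : Type u} [Group Γ] (S : Finset Γ) (g : Γ) : ℕ :=
  sInf {n | ∃ l : List Γ, (∀ x ∈ l, x ∈ S) ∧ l.length = n ∧ l.prod = g}

/-- Word length of an element of a free group. -/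
noncomputable def fgLength {α : Type v} (w : FreeGroup α) : ℕ :=
  sInf {n | ∃ l : List (α × Bool), l.length = n ∧ FreeGroup.mk l = w}

/-- The canonical homomorphism `F_S → Γ` extending the inclusion `S ↪ Γ`. -/
noncomputable def pihom {Γ : Type u} [Group Γ] (S : Finset Γ) : FreeGroup ↥S →* Γ :=
  FreeGroup.lift fun s => (s : Γ)

/-- The homomorphism `τ : F_S → Sym(X)` with `τ(s) = σ(s)` for `s ∈ S`. -/
noncomputable def SoficApprox.tau {Γ : Type u} [Group Γ] {S : Finset Γ}
    (A : SoficApprox Γ S) : FreeGroup ↥S →* Equiv.Perm A.Total :=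
  FreeGroup.lift fun s => A.perm (s : Γ)

/-! On `∂Y` the maps `σ̄(g)` compose like the group: a free ultrafilter lives on arbitrarily late
components `X i`, where `σ_i` is multiplicative on `Y i`. Hence the core is
`∂Y ∩ ⋂_g σ̄(g)⁻¹(∂Y)`, which is closed and invariant. It is nonempty by a counting argument: once
`(|T| + 1) ε_i < 1`, some point of `Y i` has all its `T`-translates in `Y i`, and an ultrafilter
through these sets (over all finite `T` and all tails of components) lies in the core. -/

namespace Ultrafilter

variable {α β : Type*}

lemma map_eq_map_of_eqOn {f g : α → β} {η : Ultrafilter α} {s : Set α} (hs : s ∈ η)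
    (h : Set.EqOn f g s) : η.map f = η.map g :=
  coe_injective (Filter.map_congr (Filter.eventuallyEq_of_mem hs h))

lemma map_equiv_ne_pure (e : α ≃ β) {η : Ultrafilter α} (hη : ∀ a, η ≠ pure a) (b : β) :
    η.map e ≠ pure b := by
  intro h
  apply hη (e.symm b)
  rw [← map_pure, ← h, map_map, e.symm_comp_self, map_id]

lemma continuous_map (f : α → β) : Continuous (map f) := by
  refine ultrafilterBasis_is_basis.continuous_iff.2 ?_
  rintro _ ⟨s, rfl⟩
  exact ultrafilter_isOpen_basic (f ⁻¹' s)

lemma isOpen_singleton_pure (a : α) : IsOpen {(pure a : Ultrafilter α)} := by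
  convert ultrafilter_isOpen_basic {a} using 1
  ext η
  refine ⟨fun h => h ▸ mem_pure.2 rfl, fun h => ?_⟩
  obtain ⟨x, rfl, hx⟩ := eq_pure_of_finite_mem (Set.finite_singleton a) h
  exact hx

lemma isClosed_setOf_forall_ne_pure : IsClosed {η : Ultrafilter α | ∀ a, η ≠ pure a} := by
  simp only [Set.ofPred_forall]
  exact isClosed_iInter fun a => (isOpen_singleton_pure a).isClosed_compl

lemma exists_forall_mem_of_antitone {ι : Type*} [Preorder ι] [IsDirectedOrder ι] [Nonempty ι]
    {C : ι → Set α} (hC : Antitone C) (hne : ∀ i, (C i).Nonempty) :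
    ∃ η : Ultrafilter α, ∀ i, C i ∈ η := by
  have : (⨅ i, Filter.principal (C i)).NeBot :=
    Filter.iInf_neBot_of_directed' (Filter.monotone_principal.comp_antitone hC).directed_ge
      fun i => Filter.principal_neBot_iff.2 (hne i)
  exact ⟨.of _, fun i => of_le _ (Filter.mem_iInf_of_mem i (Filter.mem_principal_self _))⟩

end Ultrafilter

lemma Sigma.ultrafilter_forall_ne_pure_iff {X : ℕ → Type*} [∀ i, Finite (X i)]
    (η : Ultrafilter (Σ i, X i)) : (∀ p, η ≠ pure p) ↔ ∀ n, {p : Σ i, X i | n ≤ p.1} ∈ η := by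
  refine ⟨fun hη n => ?_, fun h p hp => ?_⟩
  · have hfin : {p : Σ i, X i | p.1 < n}.Finite :=
      (Set.finite_Iio n).preimage' fun i _ =>
        (Set.finite_range (Sigma.mk i)).subset fun | ⟨_, x⟩, rfl => ⟨x, rfl⟩
    rcases η.le_cofinite_or_eq_pure with hcof | ⟨a, rfl⟩
    · exact Filter.mem_of_superset (hcof hfin.compl_mem_cofinite)
        fun p (hp : ¬p.1 < n) => not_lt.1 hp
    · exact absurd rfl (hη a)
  · have := h (p.1 + 1)
    rw [hp, Ultrafilter.mem_pure] at this
    exact Nat.not_succ_le_self p.1 this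

lemma exists_mem_forall_perm_apply_mem {α ι : Type*} [Finite α] (σ : ι → Equiv.Perm α)
    (Y : Set α) (T : Finset ι) (h : (T.card + 1) * Yᶜ.ncard < Nat.card α) :
    ∃ x ∈ Y, ∀ g ∈ T, σ g x ∈ Y := by
  by_contra! hbad
  have hcover : Set.univ ⊆ Yᶜ ∪ ⋃ g ∈ T, σ g ⁻¹' Yᶜ := fun x _ => by
    by_cases hx : x ∈ Y
    · obtain ⟨g, hg, hgx⟩ := hbad x hx
      exact Or.inr (Set.mem_biUnion hg hgx)
    · exact Or.inl hx
  have hpre : ∀ g, (σ g ⁻¹' Yᶜ).ncard = Yᶜ.ncard := fun g =>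
    Set.ncard_preimage_of_injective_subset_range (σ g).injective (by simp)
  have := calc Nat.card α = (Set.univ : Set α).ncard := (Set.ncard_univ α).symm
    _ ≤ (Yᶜ ∪ ⋃ g ∈ T, σ g ⁻¹' Yᶜ).ncard := Set.ncard_le_ncard hcover
    _ ≤ Yᶜ.ncard + ∑ g ∈ T, (σ g ⁻¹' Yᶜ).ncard :=
        (Set.ncard_union_le _ _).trans (Nat.add_le_add_left (T.set_ncard_biUnion_le _) _)
    _ = (T.card + 1) * Yᶜ.ncard := by simp only [hpre, Finset.sum_const, smul_eq_mul]; ring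
  omega

namespace SoficApprox

variable {Γ : Type u} [Group Γ] {S : Finset Γ} (A : SoficApprox Γ S)

instance instFiniteX (i : ℕ) : Finite (A.X i) := A.finX i

lemma sigma_one_apply {i : ℕ} {y : A.X i} (hy : y ∈ A.Y i) : A.sigma i 1 y = y :=
  (A.sigma i 1).injective <| by
    simpa using A.sigma_mul i 1 (A.F_one i) 1 (A.F_one i) y hy

lemma eventually_sigma_mul (g h : Γ) :
    ∀ᶠ i in Filter.atTop, ∀ y ∈ A.Y i, A.sigma i g (A.sigma i h y) = A.sigma i (g * h) y := by
  obtain ⟨a, ha⟩ := A.F_exhausts g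
  obtain ⟨b, hb⟩ := A.F_exhausts h
  filter_upwards [Filter.eventually_ge_atTop a, Filter.eventually_ge_atTop b] with i hai hbi
  exact A.sigma_mul i g (A.F_mono hai ha) h (A.F_mono hbi hb)

lemma ncard_compl_Y_le (i : ℕ) : ((A.Y i)ᶜ.ncard : ℝ) ≤ A.eps i * Nat.card (A.X i) := by
  have hsum := congrArg (Nat.cast : ℕ → ℝ) (Set.ncard_add_ncard_compl (A.Y i))
  push_cast at hsum
  linarith [A.Y_large i]

lemma exists_forall_sigma_mem_Y (T : Finset Γ) (n : ℕ) :
    ∃ i ≥ n, ∃ x ∈ A.Y i, ∀ g ∈ T, A.sigma i g x ∈ A.Y i := by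
  have hsmall : ∀ᶠ i in Filter.atTop, ((T.card : ℝ) + 1) * A.eps i < 1 :=
    (A.eps_lim.const_mul _).eventually (gt_mem_nhds (by norm_num))
  obtain ⟨i, hi, hn⟩ := (hsmall.and (Filter.eventually_ge_atTop n)).exists
  have hN : (0 : ℝ) < Nat.card (A.X i) := by
    have := A.neX i
    exact_mod_cast Nat.card_pos
  have hcount : ((T.card : ℝ) + 1) * (A.Y i)ᶜ.ncard < Nat.card (A.X i) :=
    calc ((T.card : ℝ) + 1) * (A.Y i)ᶜ.ncard
        ≤ ((T.card : ℝ) + 1) * (A.eps i * Nat.card (A.X i)) := by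
          gcongr; exact A.ncard_compl_Y_le i
      _ < Nat.card (A.X i) := by rw [← mul_assoc]; exact mul_lt_of_lt_one_left hN hi
  exact ⟨i, hn, exists_mem_forall_perm_apply_mem (A.sigma i) (A.Y i) T (by exact_mod_cast hcount)⟩

lemma mem_permBar {s : Set A.Total} {η : Ultrafilter A.Total} {g : Γ} :
    s ∈ A.permBar g η ↔ A.perm g ⁻¹' s ∈ η :=
  Ultrafilter.mem_map

lemma continuous_permBar (g : Γ) : Continuous (A.permBar g) :=
  Ultrafilter.continuous_map _

lemma isClosed_bdY : IsClosed A.bdY :=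
  Ultrafilter.isClosed_setOf_forall_ne_pure.inter (ultrafilter_isClosed_basic _)

lemma permBar_mem_bdY_iff {η : Ultrafilter A.Total} (hη : ∀ p, η ≠ pure p) (g : Γ) :
    A.permBar g η ∈ A.bdY ↔ A.perm g ⁻¹' A.Ytot ∈ η :=
  (and_iff_right (Ultrafilter.map_equiv_ne_pure _ hη)).trans A.mem_permBar

lemma permBar_one {η : Ultrafilter A.Total} (hη : A.Ytot ∈ η) : A.permBar 1 η = η :=
  (Ultrafilter.map_eq_map_of_eqOn hη fun ⟨i, _⟩ hy =>
    congrArg (Sigma.mk i) (A.sigma_one_apply hy)).trans η.map_id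

lemma permBar_permBar {η : Ultrafilter A.Total} (hη : η ∈ A.bdY) (g h : Γ) :
    A.permBar g (A.permBar h η) = A.permBar (g * h) η := by
  obtain ⟨i₀, hi₀⟩ := (A.eventually_sigma_mul g h).exists_forall_of_atTop
  have htail := (Sigma.ultrafilter_forall_ne_pure_iff η).1 hη.1 i₀
  rw [permBar, permBar, permBar, Ultrafilter.map_map]
  exact Ultrafilter.map_eq_map_of_eqOn (Filter.inter_mem hη.2 htail)
    fun ⟨i, x⟩ ⟨hx, hi⟩ => congrArg (Sigma.mk i) (hi₀ i hi x hx)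

lemma exists_mem_bdY_forall_permBar_mem_bdY :
    ∃ η ∈ A.bdY, ∀ g, A.permBar g η ∈ A.bdY := by
  let C : Finset Γ × ℕ → Set A.Total := fun q =>
    {p | q.2 ≤ p.1 ∧ p ∈ A.Ytot ∧ ∀ g ∈ q.1, A.perm g p ∈ A.Ytot}
  have hC : Antitone C := fun q r hqr p ⟨hn, hY, hT⟩ =>
    ⟨hqr.2.trans hn, hY, fun g hg => hT g (hqr.1 hg)⟩
  have hne : ∀ q, (C q).Nonempty := fun ⟨T, n⟩ => by
    obtain ⟨i, hi, x, hx, hT⟩ := A.exists_forall_sigma_mem_Y T n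
    exact ⟨⟨i, x⟩, hi, hx, hT⟩
  obtain ⟨η, hη⟩ := Ultrafilter.exists_forall_mem_of_antitone hC hne
  have hfree : ∀ p, η ≠ pure p :=
    (Sigma.ultrafilter_forall_ne_pure_iff η).2 fun n =>
      Filter.mem_of_superset (hη (∅, n)) fun _ hp => hp.1
  refine ⟨η, ⟨hfree, Filter.mem_of_superset (hη (∅, 0)) fun _ hp => hp.2.1⟩, fun g => ?_⟩
  exact (A.permBar_mem_bdY_iff hfree g).2 <|
    Filter.mem_of_superset (hη ({g}, 0)) fun _ hp => hp.2.2 g (Finset.mem_singleton_self g)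

lemma core_subset_bdY : A.core ⊆ A.bdY := fun η hη => by
  obtain ⟨ξ, hξ, rfl⟩ := Set.mem_iInter.1 hη 1
  rwa [A.permBar_one hξ.2]

lemma core_eq : A.core = A.bdY ∩ ⋂ g, A.permBar g ⁻¹' A.bdY := by
  ext η
  simp only [Set.mem_inter_iff, Set.mem_iInter, Set.mem_preimage]
  refine ⟨fun hη => ⟨A.core_subset_bdY hη, fun g => ?_⟩, fun ⟨hη, hg⟩ => ?_⟩
  · obtain ⟨ξ, hξ, rfl⟩ := Set.mem_iInter.1 hη g⁻¹
    rwa [A.permBar_permBar hξ, mul_inv_cancel, A.permBar_one hξ.2]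
  · refine Set.mem_iInter.2 fun g => ⟨A.permBar g⁻¹ η, hg g⁻¹, ?_⟩
    rw [A.permBar_permBar hη, mul_inv_cancel, A.permBar_one hη.2]

lemma core_nonempty : A.core.Nonempty := by
  obtain ⟨η, hη, hg⟩ := A.exists_mem_bdY_forall_permBar_mem_bdY
  exact ⟨η, A.core_eq ▸ ⟨hη, Set.mem_iInter.2 hg⟩⟩

lemma isClosed_core : IsClosed A.core :=
  A.core_eq ▸ A.isClosed_bdY.inter (isClosed_iInter fun g =>
    A.isClosed_bdY.preimage (A.continuous_permBar g))

lemma permBar_mem_core {η : Ultrafilter A.Total} (hη : η ∈ A.core) (g : Γ) :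
    A.permBar g η ∈ A.core := by
  rw [core_eq, Set.mem_inter_iff, Set.mem_iInter] at hη ⊢
  refine ⟨hη.2 g, fun h => ?_⟩
  rw [Set.mem_preimage, A.permBar_permBar hη.1]
  exact hη.2 (h * g)

lemma permBar_image_core (g : Γ) : A.permBar g '' A.core = A.core := by
  refine Set.Subset.antisymm ?_ fun ζ hζ => ⟨A.permBar g⁻¹ ζ, A.permBar_mem_core hζ g⁻¹, ?_⟩
  · rintro _ ⟨η, hη, rfl⟩
    exact A.permBar_mem_core hη g
  · have hζ' := A.core_subset_bdY hζ
    rw [A.permBar_permBar hζ', mul_inv_cancel, A.permBar_one hζ'.2]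

end SoficApprox

open SoficApprox in
theorem core_nonempty_closed_invariant_general
    {Γ : Type u} [Group Γ] {S : Finset Γ}
    (A : SoficApprox Γ S) :
    A.core.Nonempty ∧ IsClosed A.core ∧ A.core ⊆ A.bdY ∧
      ∀ g : Γ, A.permBar g '' A.core = A.core :=
  ⟨A.core_nonempty, A.isClosed_core, A.core_subset_bdY, A.permBar_image_core⟩

open SoficApprox in
/-- **Basic properties of the core.**
The core `Z = ⋂_{g ∈ Γ} σ̄(g)''(∂Y)` is a nonempty closed subset of `βX` contained in `∂Y`,
invariant under every `σ̄(g)`: `σ̄(g)''(Z) = Z`. -/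
theorem core_nonempty_closed_invariant
    {Γ : Type u} [Group Γ] {S : Finset Γ}
    (hSsymm : ∀ s ∈ S, s⁻¹ ∈ S)
    (hSgen : Subgroup.closure (S : Set Γ) = ⊤)
    (A : SoficApprox Γ S) :
    A.core.Nonempty ∧ IsClosed A.core ∧ A.core ⊆ A.bdY ∧
      ∀ g : Γ, A.permBar g '' A.core = A.core :=
  core_nonempty_closed_invariant_general A
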